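/- If S is a full segment other than [1,n], then there exists a unique smallest full segment properly containing S (the father of S in the tree of full segments). -/
import Mathlib


/-- Minimum of the values `l i, ..., l j` (real-valued sequence). -/
noncomputable def segMin (l : ℕ → ℝ) (i j : ℕ) : ℝ :=
  (Finset.Icc i j).fold min (l i) l

/-- Neighborhood maximin parameter `m[i,j]`: the maximum of `min(l h, ..., l k)` over
subintervals `[h,k]` of `[1,n]` properly containing `[i,j]`, with value `0` if there
are none (in particular for `[i,j] = [1,n]`). -/
noncomputable def nmaxim (l : ℕ → ℝ) (n i j : ℕ) : ℝ :=
  (((Finset.Icc 1 i) ×ˢ (Finset.Icc j n)).filter (fun p => p ≠ (i, j))).fold max 0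
    (fun p => segMin l p.1 p.2)

/-- `[i,j]` is a full segment (island) of the sequence `l` restricted to `[1,n]`. -/
def IsFullSeg (l : ℕ → ℝ) (n i j : ℕ) : Prop :=
  1 ≤ i ∧ i ≤ j ∧ j ≤ n ∧ nmaxim l n i j < segMin l i j

lemma segMin_le (l : ℕ → ℝ) {i j k : ℕ} (hk : k ∈ Finset.Icc i j) : segMin l i j ≤ l k :=
  (Finset.fold_min_le _).mpr (Or.inr ⟨k, hk, le_rfl⟩)

lemma le_segMin (l : ℕ → ℝ) {i j : ℕ} {a : ℝ} (hij : i ≤ j)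
    (h : ∀ k ∈ Finset.Icc i j, a ≤ l k) : a ≤ segMin l i j :=
  (Finset.le_fold_min _).mpr ⟨h i (by simp [hij]), h⟩

lemma segMin_le_nmaxim (l : ℕ → ℝ) {n i j h k : ℕ} (h1 : 1 ≤ h) (h2 : h ≤ i)
    (h3 : j ≤ k) (h4 : k ≤ n) (hne : (h, k) ≠ (i, j)) :
    segMin l h k ≤ nmaxim l n i j :=
  (Finset.le_fold_max _).mpr (Or.inr ⟨(h, k), by simp [h1, h2, h3, h4, hne], le_rfl⟩)

lemma isFullSeg_one_n (l : ℕ → ℝ) {n : ℕ} (hn : 1 ≤ n)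
    (hpos : ∀ k ∈ Finset.Icc 1 n, 0 < l k) : IsFullSeg l n 1 n := by
  refine ⟨le_rfl, hn, le_rfl, ?_⟩
  have h0 : nmaxim l n 1 n = 0 := by
    unfold nmaxim
    have : (((Finset.Icc 1 1) ×ˢ (Finset.Icc n n)).filter (fun p => p ≠ (1, n))) = ∅ := by
      ext p
      simp only [Finset.mem_filter, Finset.mem_product, Finset.mem_Icc, Finset.notMem_empty,
        iff_false, not_and]
      intro ⟨⟨ha, hb⟩, ⟨hc, hd⟩⟩
      simp [Prod.ext_iff]
      omega
    rw [this, Finset.fold_empty]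
  rw [h0]
  exact (Finset.lt_fold_min _).mpr ⟨hpos 1 (by simp [hn]), fun k hk => hpos k hk⟩

lemma not_overlap (l : ℕ → ℝ) {n a b c d : ℕ}
    (hab : IsFullSeg l n a b) (hcd : IsFullSeg l n c d)
    (h1 : a < c) (h2 : c ≤ b) (h3 : b < d) : False := by
  obtain ⟨ha1, hab2, hb, hfab⟩ := hab
  obtain ⟨hc1, hcd2, hd, hfcd⟩ := hcd
  have had : a ≤ d := le_trans hab2 (le_of_lt h3)
  have e1 : segMin l a d ≤ nmaxim l n a b :=
    segMin_le_nmaxim l ha1 le_rfl (le_of_lt h3) hd (by simp [Prod.ext_iff]; omega)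
  have e2 : segMin l a d ≤ nmaxim l n c d :=
    segMin_le_nmaxim l ha1 (le_of_lt h1) le_rfl hd (by simp [Prod.ext_iff]; omega)
  have e3 : min (segMin l a b) (segMin l c d) ≤ segMin l a d := by
    apply le_segMin l had
    intro k hk
    simp only [Finset.mem_Icc] at hk
    rcases le_or_gt k b with hkb | hkb
    · exact le_trans (min_le_left _ _) (segMin_le l (by simp; omega))
    · exact le_trans (min_le_right _ _) (segMin_le l (by simp; omega))
  have hx := lt_of_le_of_lt e1 hfab
  have hy := lt_of_le_of_lt e2 hfcd
  exact lt_irrefl _ (lt_of_lt_of_le (lt_min hx hy) e3)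

lemma nested (l : ℕ → ℝ) {n a b c d i j : ℕ} (hij : i ≤ j)
    (hab : IsFullSeg l n a b) (hcd : IsFullSeg l n c d)
    (s1 : Finset.Icc i j ⊆ Finset.Icc a b) (s2 : Finset.Icc i j ⊆ Finset.Icc c d) :
    Finset.Icc a b ⊆ Finset.Icc c d ∨ Finset.Icc c d ⊆ Finset.Icc a b := by
  have hi1 := s1 (Finset.mem_Icc.mpr ⟨le_rfl, hij⟩)
  have hj1 := s1 (Finset.mem_Icc.mpr ⟨hij, le_rfl⟩)
  have hi2 := s2 (Finset.mem_Icc.mpr ⟨le_rfl, hij⟩)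
  have hj2 := s2 (Finset.mem_Icc.mpr ⟨hij, le_rfl⟩)
  simp only [Finset.mem_Icc] at hi1 hj1 hi2 hj2
  rcases le_or_gt c a with hca | hca
  · rcases le_or_gt b d with hbd | hbd
    · exact Or.inl (Finset.Icc_subset_Icc hca hbd)
    · rcases eq_or_lt_of_le hca with rfl | hca'
      · exact Or.inr (Finset.Icc_subset_Icc le_rfl (le_of_lt hbd))
      · exact (not_overlap l hcd hab hca' (le_trans (le_trans hi1.1 hij) hj2.2) hbd).elim
  · rcases le_or_gt d b with hdb | hdb
    · exact Or.inr (Finset.Icc_subset_Icc (le_of_lt hca) hdb)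
    · exact (not_overlap l hab hcd hca (le_trans (le_trans hi2.1 hij) hj1.2) hdb).elim

/-- Every full segment other than `[1,n]` has a unique father: a unique smallest full
segment properly containing it. -/
theorem exists_unique_father (l : ℕ → ℝ) (n i j : ℕ)
    (hpos : ∀ k ∈ Finset.Icc 1 n, 0 < l k)
    (h : IsFullSeg l n i j) (hne : ¬(i = 1 ∧ j = n)) :
    ∃! p : ℕ × ℕ, IsFullSeg l n p.1 p.2 ∧ Finset.Icc i j ⊂ Finset.Icc p.1 p.2 ∧
      ∀ q : ℕ × ℕ, IsFullSeg l n q.1 q.2 → Finset.Icc i j ⊂ Finset.Icc q.1 q.2 →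
        Finset.Icc p.1 p.2 ⊆ Finset.Icc q.1 q.2 := by
  classical
  obtain ⟨hi1, hij, hjn, _⟩ := h
  have hn : 1 ≤ n := le_trans hi1 (le_trans hij hjn)
  -- the finite set of full segments properly containing [i,j]
  set T : Finset (ℕ × ℕ) := ((Finset.Icc 1 i) ×ˢ (Finset.Icc j n)).filter
    (fun p => IsFullSeg l n p.1 p.2 ∧ Finset.Icc i j ⊂ Finset.Icc p.1 p.2) with hT
  have memT : ∀ q : ℕ × ℕ, IsFullSeg l n q.1 q.2 → Finset.Icc i j ⊂ Finset.Icc q.1 q.2 →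
      q ∈ T := by
    intro q hq hsub
    have hi := hsub.subset (Finset.mem_Icc.mpr ⟨le_rfl, hij⟩)
    have hj := hsub.subset (Finset.mem_Icc.mpr ⟨hij, le_rfl⟩)
    simp only [Finset.mem_Icc] at hi hj
    simp only [hT, Finset.mem_filter, Finset.mem_product, Finset.mem_Icc]
    exact ⟨⟨⟨hq.1, hi.1⟩, ⟨hj.2, hq.2.2.1⟩⟩, hq, hsub⟩
  have hTne : T.Nonempty := by
    refine ⟨(1, n), memT (1, n) (isFullSeg_one_n l hn hpos) ?_⟩
    refine ⟨Finset.Icc_subset_Icc hi1 hjn, fun hsub => ?_⟩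
    have h1 : (1 : ℕ) ∈ Finset.Icc i j := hsub (Finset.mem_Icc.mpr ⟨le_rfl, hn⟩)
    have h2 : n ∈ Finset.Icc i j := hsub (Finset.mem_Icc.mpr ⟨hn, le_rfl⟩)
    simp only [Finset.mem_Icc] at h1 h2
    exact hne ⟨le_antisymm h1.1 hi1, le_antisymm hjn h2.2⟩
  obtain ⟨p, hpT, hpmin⟩ := T.exists_min_image (fun p => p.2 - p.1) hTne
  simp only [hT, Finset.mem_filter, Finset.mem_product, Finset.mem_Icc] at hpT
  obtain ⟨⟨⟨hp1, hpi⟩, hjp, hpn⟩, hpfull, hpsub⟩ := hpT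
  have key : ∀ q : ℕ × ℕ, IsFullSeg l n q.1 q.2 → Finset.Icc i j ⊂ Finset.Icc q.1 q.2 →
      Finset.Icc p.1 p.2 ⊆ Finset.Icc q.1 q.2 := by
    intro q hq hqsub
    have hqT := memT q hq hqsub
    have hcard : p.2 - p.1 ≤ q.2 - q.1 := hpmin q hqT
    have hiq := hqsub.subset (Finset.mem_Icc.mpr ⟨le_rfl, hij⟩)
    have hjq := hqsub.subset (Finset.mem_Icc.mpr ⟨hij, le_rfl⟩)
    simp only [Finset.mem_Icc] at hiq hjq
    rcases nested l hij hpfull hq hpsub.subset hqsub.subset with hle | hle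
    · exact hle
    · -- Icc q ⊆ Icc p ; show they are equal using minimality
      have hq1 := hle (Finset.mem_Icc.mpr ⟨le_rfl, le_trans hiq.1 (le_trans hij hjq.2)⟩)
      have hq2 := hle (Finset.mem_Icc.mpr ⟨le_trans hiq.1 (le_trans hij hjq.2), le_rfl⟩)
      simp only [Finset.mem_Icc] at hq1 hq2
      have : p.1 = q.1 ∧ p.2 = q.2 := by
        have : p.1 ≤ p.2 := le_trans hpi (le_trans hij hjp)
        omega
      rw [this.1, this.2]
  refine ⟨p, ⟨hpfull, hpsub, key⟩, ?_⟩
  rintro q ⟨hqfull, hqsub, hqmin⟩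
  have h1 : Finset.Icc q.1 q.2 ⊆ Finset.Icc p.1 p.2 := hqmin p hpfull hpsub
  have h2 : Finset.Icc p.1 p.2 ⊆ Finset.Icc q.1 q.2 := key q hqfull hqsub
  have hiq := hqsub.subset (Finset.mem_Icc.mpr ⟨le_rfl, hij⟩)
  have hjq := hqsub.subset (Finset.mem_Icc.mpr ⟨hij, le_rfl⟩)
  simp only [Finset.mem_Icc] at hiq hjq
  have hq12 : q.1 ≤ q.2 := le_trans hiq.1 (le_trans hij hjq.2)
  have hp12 : p.1 ≤ p.2 := le_trans hpi (le_trans hij hjp)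
  have a1 := h1 (Finset.mem_Icc.mpr ⟨le_rfl, hq12⟩)
  have a2 := h1 (Finset.mem_Icc.mpr ⟨hq12, le_rfl⟩)
  have b1 := h2 (Finset.mem_Icc.mpr ⟨le_rfl, hp12⟩)
  have b2 := h2 (Finset.mem_Icc.mpr ⟨hp12, le_rfl⟩)
  simp only [Finset.mem_Icc] at a1 a2 b1 b2
  exact Prod.ext (by omega) (by omega)
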